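/- arXiv:2103.07690 — 5 statements merged into one kernel-verified Lean document; each statement's English description precedes it below -/
import Mathlib

section
/- For all ω > 0, t > 0, and α ∈ (1/2, 1), the inequality (ω / Γ(2α-1)) ∫₀ᵗ (t-r)^{2α-2} E_{2α-1}(ω r^{2α-1}) dr ≤ E_{2α-1}(ω t^{2α-1}) holds, where E_γ(z) = ∑_{k=0}^∞ z^k / Γ(γk+1) is the one-parameter Mittag-Leffler function. -/
open Real intervalIntegral Set

/-- The one-parameter Mittag-Leffler function `E_γ(z) = ∑ z^k / Γ(γk+1)`. -/
noncomputable def mittagLeffler (γ z : ℝ) : ℝ := ∑' k : ℕ, z ^ k / Real.Gamma (γ * k + 1)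

lemma ml_summable {γ z : ℝ} (hγ : 0 < γ) (hz : 0 ≤ z) :
    Summable (fun k : ℕ => z ^ k / Real.Gamma (γ * k + 1)) := by
  set m : ℕ := ⌈1/γ⌉₊ with hmdef
  have hm0 : 0 < m := Nat.ceil_pos.mpr (by positivity)
  have : NeZero m := ⟨hm0.ne'⟩
  have hγm : (1:ℝ) ≤ γ * m := by
    have h := Nat.le_ceil (1/γ)
    calc (1:ℝ) = γ * (1/γ) := by field_simp
    _ ≤ γ * m := by
        exact mul_le_mul_of_nonneg_left h hγ.le
  set B : ℝ := (max 1 z) ^ m with hBdef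
  have hB1 : (1:ℝ) ≤ B := one_le_pow₀ (le_max_left 1 z)
  have hB0 : (0:ℝ) ≤ B := by linarith
  -- the dominating sequence
  set G : ℕ → ℝ := fun k => B * (B ^ (k / m) / (Nat.factorial (k / m))) with hGdef
  have hf : Summable (fun q : ℕ => B ^ q / (Nat.factorial q : ℝ)) :=
    Real.summable_pow_div_factorial B
  have hfn : ∀ q : ℕ, 0 ≤ B ^ q / (Nat.factorial q : ℝ) := fun q => by positivity
  have hg : Summable (fun k : ℕ => B ^ (k / m) / (Nat.factorial (k / m) : ℝ)) := by
    have hprod : Summable (fun p : ℕ × Fin m => B ^ p.1 / (Nat.factorial p.1 : ℝ)) := by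
      refine (summable_prod_of_nonneg (fun p => hfn p.1)).2 ⟨fun q => ?_, ?_⟩
      · exact Summable.of_finite
      · simp only [tsum_fintype, Finset.sum_const, Finset.card_univ, Fintype.card_fin,
          nsmul_eq_mul]
        exact hf.mul_left _
    have := ((Nat.divModEquiv m).summable_iff
      (f := fun p : ℕ × Fin m => B ^ p.1 / (Nat.factorial p.1 : ℝ))).2 hprod
    exact this
  have hG : Summable G := hg.mul_left B
  -- comparison
  have key : ∀ k : ℕ, m ≤ k → z ^ k / Real.Gamma (γ * k + 1) ≤ G k := by
    intro k hk
    set q : ℕ := k / m with hq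
    have hq1 : 1 ≤ q := (Nat.one_le_div_iff hm0).2 hk
    have hqle : (q:ℝ) ≤ γ * k := by
      have h1 : (q:ℝ) * m ≤ k := by
        exact_mod_cast Nat.div_mul_le_self k m
      have h2 : (k:ℝ) ≤ γ * k * m := by
        calc (k:ℝ) = k * 1 := (mul_one _).symm
        _ ≤ k * (γ * m) := by
            exact mul_le_mul_of_nonneg_left hγm (Nat.cast_nonneg k)
        _ = γ * k * m := by ring
      nlinarith [Nat.cast_nonneg (α := ℝ) m, hm0, (by exact_mod_cast hm0 : (0:ℝ) < m)]
    have hGamma : (Nat.factorial q : ℝ) ≤ Real.Gamma (γ * k + 1) := by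
      have h2q : (2:ℝ) ≤ (q:ℝ) + 1 := by
        have : (1:ℝ) ≤ q := by exact_mod_cast hq1
        linarith
      have h2k : ((q:ℝ) + 1) ≤ γ * k + 1 := by linarith
      have := Real.Gamma_strictMonoOn_Ici.monotoneOn (a := (q:ℝ) + 1) (b := γ * k + 1)
        (by exact h2q) (by exact le_trans h2q h2k) h2k
      rwa [Real.Gamma_nat_eq_factorial q] at this
    have hzk : z ^ k ≤ B ^ (q + 1) := by
      have h1 : z ^ k ≤ (max 1 z) ^ k := pow_le_pow_left₀ hz (le_max_right 1 z) k
      have h2 : (max 1 z) ^ k ≤ (max 1 z) ^ (m * (q + 1)) := by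
        apply pow_le_pow_right₀ (le_max_left 1 z)
        have hkm : k < (q + 1) * m := (Nat.div_lt_iff_lt_mul hm0).1 (Nat.lt_succ_self q)
        rw [Nat.mul_comm]
        exact hkm.le
      calc z ^ k ≤ (max 1 z) ^ (m * (q+1)) := le_trans h1 h2
      _ = B ^ (q+1) := by rw [hBdef, ← pow_mul]
    have hfacpos : (0:ℝ) < (Nat.factorial q : ℝ) := by
      exact_mod_cast Nat.factorial_pos q
    have : z ^ k / Real.Gamma (γ * k + 1) ≤ B ^ (q + 1) / (Nat.factorial q : ℝ) := by
      apply div_le_div₀ (by positivity) hzk hfacpos hGamma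
    calc z ^ k / Real.Gamma (γ * k + 1) ≤ B ^ (q + 1) / (Nat.factorial q : ℝ) := this
    _ = G k := by rw [hGdef]; simp only [← hq]; rw [pow_succ]; ring
  -- conclude
  rw [← summable_nat_add_iff m]
  have hGs : Summable (fun k => G (k + m)) := (summable_nat_add_iff m).2 hG
  apply Summable.of_nonneg_of_le (fun k => ?_) (fun k => key (k + m) (Nat.le_add_left m k)) hGs
  have hΓ : 0 < Real.Gamma (γ * (k + m : ℕ) + 1) :=
    Real.Gamma_pos_of_pos (by positivity)
  positivity

lemma beta01 {a b : ℝ} (ha : 0 < a) (hb : 0 < b) :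
    ∫ x in (0:ℝ)..1, x ^ (a-1) * (1-x) ^ (b-1)
      = Real.Gamma a * Real.Gamma b / Real.Gamma (a+b) := by
  have h1 : Complex.betaIntegral a b
      = ((∫ x in (0:ℝ)..1, x ^ (a-1) * (1-x) ^ (b-1) : ℝ) : ℂ) := by
    rw [Complex.betaIntegral, ← intervalIntegral.integral_ofReal]
    refine intervalIntegral.integral_congr fun x hx => ?_
    rw [Set.uIcc_of_le zero_le_one] at hx
    have h1x : (0:ℝ) ≤ 1 - x := by linarith [hx.2]
    rw [Complex.ofReal_mul, Complex.ofReal_cpow hx.1, Complex.ofReal_cpow h1x]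
    push_cast
    ring
  have h2 := Complex.Gamma_mul_Gamma_eq_betaIntegral
    (s := (a:ℂ)) (t := (b:ℂ)) (by simpa using ha) (by simpa using hb)
  rw [h1] at h2
  have h4 : Real.Gamma a * Real.Gamma b
      = Real.Gamma (a+b) * ∫ x in (0:ℝ)..1, x ^ (a-1) * (1-x) ^ (b-1) := by
    rw [← Complex.ofReal_add] at h2
    rw [Complex.Gamma_ofReal, Complex.Gamma_ofReal, Complex.Gamma_ofReal] at h2
    exact_mod_cast h2
  have hΓ : Real.Gamma (a+b) ≠ 0 := (Real.Gamma_pos_of_pos (by linarith)).ne'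
  field_simp
  linarith [h4]

lemma betaIntegrable {a b t : ℝ} (ha : 0 < a) (hb : 0 < b) (ht : 0 < t) :
    IntervalIntegrable (fun r => (t - r) ^ (a-1) * r ^ (b-1)) MeasureTheory.volume 0 t := by
  have h1 : IntervalIntegrable (fun r : ℝ => (t - r) ^ (a-1) * r ^ (b-1))
      MeasureTheory.volume 0 (t/2) := by
    have hint : IntervalIntegrable (fun r : ℝ => r ^ (b-1)) MeasureTheory.volume 0 (t/2) :=
      intervalIntegrable_rpow' (by linarith)
    refine hint.continuousOn_mul ?_
    have : Set.uIcc (0:ℝ) (t/2) = Set.Icc 0 (t/2) := Set.uIcc_of_le (by linarith)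
    rw [this]
    apply ContinuousOn.rpow_const
    · exact (continuous_const.sub continuous_id).continuousOn
    · intro x hx
      left
      have := hx.2
      simp only [Set.mem_Icc] at hx
      have : t - x > 0 := by linarith [hx.2]
      exact this.ne'
  have h2 : IntervalIntegrable (fun r : ℝ => (t - r) ^ (a-1) * r ^ (b-1))
      MeasureTheory.volume (t/2) t := by
    have hint : IntervalIntegrable (fun r : ℝ => r ^ (a-1)) MeasureTheory.volume 0 (t/2) :=
      intervalIntegrable_rpow' (by linarith)
    have hint2 := hint.comp_sub_left t
    -- : IntervalIntegrable (fun x => (t - x) ^ (a-1)) volume (t - t/2) (t - 0)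
    have heq : t - t/2 = t/2 := by ring
    rw [heq, sub_zero] at hint2
    refine hint2.symm.mul_continuousOn ?_
    have : Set.uIcc (t/2) t = Set.Icc (t/2) t := Set.uIcc_of_le (by linarith)
    rw [this]
    apply ContinuousOn.rpow_const continuousOn_id
    intro x hx
    simp only [Set.mem_Icc] at hx
    left
    have : 0 < x := by linarith [hx.1]
    exact this.ne'
  exact h1.trans h2

lemma betaScaled {a b t : ℝ} (ha : 0 < a) (hb : 0 < b) (ht : 0 < t) :
    ∫ r in (0:ℝ)..t, (t - r) ^ (a-1) * r ^ (b-1)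
      = Real.Gamma a * Real.Gamma b / Real.Gamma (a+b) * t ^ (a+b-1) := by
  have hsub := intervalIntegral.smul_integral_comp_mul_left
    (fun r => (t - r) ^ (a-1) * r ^ (b-1)) (a := 0) (b := 1) t
  simp only [mul_zero, mul_one] at hsub
  rw [← hsub]
  have hcong : ∫ x in (0:ℝ)..1, (t - t * x) ^ (a-1) * (t * x) ^ (b-1)
      = (t ^ (a-1) * t ^ (b-1)) * ∫ x in (0:ℝ)..1, x ^ (b-1) * (1-x) ^ (a-1) := by
    rw [← intervalIntegral.integral_const_mul]
    refine intervalIntegral.integral_congr fun x hx => ?_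
    rw [Set.uIcc_of_le zero_le_one] at hx
    have hx0 : (0:ℝ) ≤ x := hx.1
    have hx1 : (0:ℝ) ≤ 1 - x := by linarith [hx.2]
    have e1 : t - t * x = t * (1 - x) := by ring
    rw [e1, Real.mul_rpow ht.le hx1, Real.mul_rpow ht.le hx0]
    ring
  rw [hcong, beta01 hb ha]
  have : t • ((t ^ (a-1) * t ^ (b-1)) * (Real.Gamma b * Real.Gamma a / Real.Gamma (b+a)))
      = (t * (t ^ (a-1) * t ^ (b-1))) * (Real.Gamma b * Real.Gamma a / Real.Gamma (b+a)) := by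
    rw [smul_eq_mul]; ring
  rw [this]
  have htt : t * (t ^ (a-1) * t ^ (b-1)) = t ^ (a+b-1) := by
    have he : a + b - 1 = 1 + (a-1) + (b-1) := by ring
    rw [he, Real.rpow_add ht, Real.rpow_add ht, Real.rpow_one]
    ring
  rw [add_comm b a, htt]
  ring

theorem stmt_0 (ω t α : ℝ) (hω : 0 < ω) (ht : 0 < t) (hα : α ∈ Set.Ioo (1/2 : ℝ) 1) :
    (ω / Real.Gamma (2 * α - 1)) *
      ∫ r in (0:ℝ)..t, (t - r) ^ (2 * α - 2) * mittagLeffler (2 * α - 1) (ω * r ^ (2 * α - 1))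
      ≤ mittagLeffler (2 * α - 1) (ω * t ^ (2 * α - 1)) := by
  obtain ⟨hα1, hα2⟩ := hα
  have h22 : 2 * α - 2 = (2 * α - 1) - 1 := by ring
  rw [h22]
  set γ : ℝ := 2 * α - 1 with hγdef
  have hγ0 : 0 < γ := by rw [hγdef]; linarith
  have hΓγ : 0 < Real.Gamma γ := Real.Gamma_pos_of_pos hγ0
  set z : ℝ := ω * t ^ γ with hzdef
  have hz0 : 0 ≤ z := by positivity
  set g : ℕ → ℝ := fun k => z ^ k / Real.Gamma (γ * k + 1) with hgdef
  have hgsum : Summable g := ml_summable hγ0 hz0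
  set F : ℕ → ℝ → ℝ :=
    fun k r => (ω ^ k / Real.Gamma (γ * k + 1)) * ((t - r) ^ (γ - 1) * r ^ (γ * k)) with hFdef
  set C : ℕ → ℝ := fun k => (Real.Gamma γ / ω) * g (k + 1) with hCdef
  set μ := MeasureTheory.volume.restrict (Set.Ioc (0:ℝ) t) with hμdef
  have hΓk : ∀ k : ℕ, 0 < Real.Gamma (γ * k + 1) :=
    fun k => Real.Gamma_pos_of_pos (by positivity)
  -- pointwise identity on Ioc
  have hpt : ∀ r ∈ Set.Ioc (0:ℝ) t,
      (t - r) ^ (γ - 1) * mittagLeffler γ (ω * r ^ γ) = ∑' k, F k r := by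
    intro r hr
    rw [mittagLeffler, ← tsum_mul_left]
    refine tsum_congr fun k => ?_
    have hpow : (ω * r ^ γ) ^ k = ω ^ k * r ^ (γ * k) := by
      rw [mul_pow, ← Real.rpow_natCast (r ^ γ) k, ← Real.rpow_mul hr.1.le]
    rw [hpow, hFdef]
    ring
  -- integrability of each term
  have hFint : ∀ k : ℕ, MeasureTheory.Integrable (F k) μ := by
    intro k
    have hb : (0:ℝ) < γ * k + 1 := by positivity
    have h1 := betaIntegrable hγ0 hb ht
    have h2 : IntervalIntegrable (fun r => (t - r) ^ (γ - 1) * r ^ (γ * k))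
        MeasureTheory.volume 0 t := by
      have he : ∀ r : ℝ, (t - r) ^ (γ - 1) * r ^ (γ * k + 1 - 1)
          = (t - r) ^ (γ - 1) * r ^ (γ * k) := by
        intro r; norm_num
      simpa only [he] using h1
    have h3 := (h2.const_mul (ω ^ k / Real.Gamma (γ * k + 1)))
    rw [intervalIntegrable_iff_integrableOn_Ioc_of_le ht.le] at h3
    exact h3
  -- value of each term integral
  have hFval : ∀ k : ℕ, ∫ r, F k r ∂μ = C k := by
    intro k
    have hb : (0:ℝ) < γ * k + 1 := by positivity
    have h0 : ∫ r, F k r ∂μ = ∫ r in (0:ℝ)..t, F k r := by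
      rw [intervalIntegral.integral_of_le ht.le]
    rw [h0, hFdef]
    simp only []
    rw [intervalIntegral.integral_const_mul]
    have hbeta := betaScaled hγ0 hb ht
    have he : ∀ r : ℝ, (t - r) ^ (γ - 1) * r ^ (γ * k + 1 - 1)
        = (t - r) ^ (γ - 1) * r ^ (γ * k) := by intro r; norm_num
    simp only [he] at hbeta
    rw [hbeta, hCdef, hgdef]
    simp only []
    have e1 : γ + (γ * k + 1) = γ * ((k:ℝ) + 1) + 1 := by ring
    have e2 : γ + (γ * k + 1) - 1 = γ * ((k:ℝ) + 1) := by ring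
    have e3 : γ * ((k + 1 : ℕ) : ℝ) = γ * ((k:ℝ) + 1) := by push_cast; ring
    have e4 : z ^ (k + 1) = ω ^ (k + 1) * t ^ (γ * ((k:ℝ) + 1)) := by
      rw [hzdef, mul_pow, ← Real.rpow_natCast (t ^ γ) (k + 1), ← Real.rpow_mul ht.le]
      push_cast; ring_nf
    rw [e2, e1, e3, e4]
    have hΓ1 : Real.Gamma (γ * ((k:ℝ) + 1) + 1) ≠ 0 :=
      (Real.Gamma_pos_of_pos (by positivity)).ne'
    field_simp
    ring
  -- norm integrals and summability
  have hFnonneg : ∀ k : ℕ, ∀ r ∈ Set.Ioc (0:ℝ) t, 0 ≤ F k r := by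
    intro k r hr
    have h1 : (0:ℝ) ≤ t - r := by linarith [hr.2]
    have h2 : (0:ℝ) ≤ r := hr.1.le
    have := (hΓk k)
    rw [hFdef]
    positivity
  have hCsum : Summable C := (((summable_nat_add_iff 1).2 hgsum).mul_left _)
  have hFnorm : ∀ k : ℕ, ∫ r, ‖F k r‖ ∂μ = C k := by
    intro k
    rw [← hFval k, hμdef]
    refine MeasureTheory.setIntegral_congr_fun measurableSet_Ioc fun r hr => ?_
    exact Real.norm_of_nonneg (hFnonneg k r hr)
  have hFnormsum : Summable (fun k => ∫ r, ‖F k r‖ ∂μ) := by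
    simpa only [hFnorm] using hCsum
  -- interchange
  have hinter := MeasureTheory.integral_tsum_of_summable_integral_norm hFint hFnormsum
  -- compute the integral
  have hint : ∫ r in (0:ℝ)..t, (t - r) ^ (γ - 1) * mittagLeffler γ (ω * r ^ γ)
      = ∑' k, C k := by
    rw [intervalIntegral.integral_of_le ht.le]
    have h1 : ∫ r in Set.Ioc (0:ℝ) t, (t - r) ^ (γ - 1) * mittagLeffler γ (ω * r ^ γ)
        = ∫ r, (∑' k, F k r) ∂μ := by
      rw [hμdef]
      exact MeasureTheory.setIntegral_congr_fun measurableSet_Ioc hpt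
    rw [h1, ← hinter]
    exact tsum_congr hFval
  rw [hint]
  -- final computation
  have hS : (ω / Real.Gamma γ) * ∑' k, C k = ∑' k, g (k + 1) := by
    rw [hCdef]
    simp only []
    rw [tsum_mul_left, ← mul_assoc]
    have : ω / Real.Gamma γ * (Real.Gamma γ / ω) = 1 := by field_simp
    rw [this, one_mul]
  rw [hS]
  have hrhs : mittagLeffler γ z = g 0 + ∑' k, g (k + 1) := by
    rw [mittagLeffler, ← hgdef]
    exact hgsum.tsum_eq_zero_add
  rw [hrhs]
  have hg0 : 0 ≤ g 0 := by
    rw [hgdef]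
    have := hΓk 0
    positivity
  linarith
end

section
/- Let α ∈ (1/2,1) and λ > α/(1-α). Suppose g : [0,∞) → [0,∞) is measurable, bounded on every compact interval, and satisfies g(r) ≤ κ r^{-2λ} for all r ≥ T (for some constants κ, T > 0). Then lim_{t→∞} ∫₀ᵗ (t-r)^{2α-2} g(r) dr = 0. -/
open Real intervalIntegral Set Filter

theorem stmt_6 (α lam κ T : ℝ) (hα : α ∈ Set.Ioo (1/2 : ℝ) 1) (hlam : α / (1 - α) < lam)
    (hκ : 0 < κ) (hT : 0 < T) (g : ℝ → ℝ) (hg_meas : Measurable g)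
    (hg_nonneg : ∀ r, 0 ≤ g r)
    (hg_bdd : ∀ R : ℝ, ∃ M : ℝ, ∀ r ∈ Set.Icc (0:ℝ) R, g r ≤ M)
    (hg_tail : ∀ r : ℝ, T ≤ r → g r ≤ κ * r ^ (-(2 * lam))) :
    Filter.Tendsto (fun t : ℝ => ∫ r in (0:ℝ)..t, (t - r) ^ (2 * α - 2) * g r)
      Filter.atTop (nhds 0) := by
  obtain ⟨hα1, hα2⟩ := hα
  set p : ℝ := 2 * α - 2 with hpdef
  have hp : -1 < p := by simp only [hpdef]; linarith
  have hp0 : p < 0 := by simp only [hpdef]; linarith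
  have hp1 : 0 < p + 1 := by linarith
  have hlam1 : 1 < lam := by
    have h1 : 1 < α / (1 - α) := by
      rw [lt_div_iff₀ (by linarith)]; linarith
    linarith
  obtain ⟨M, hM⟩ := hg_bdd T
  have hM0 : 0 ≤ M := le_trans (hg_nonneg 0) (hM 0 ⟨le_refl _, hT.le⟩)
  have hIntRpow : ∀ t : ℝ, IntervalIntegrable (fun x => (t - x) ^ p) MeasureTheory.volume 0 t := by
    intro t
    simpa using (intervalIntegrable_rpow' hp (a := t) (b := 0)).comp_sub_left t
  have hInt : ∀ t : ℝ, 0 < t →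
      IntervalIntegrable (fun r => (t - r) ^ p * g r) MeasureTheory.volume 0 t := by
    intro t ht
    obtain ⟨Mt, hMt⟩ := hg_bdd t
    have hr := hIntRpow t
    rw [intervalIntegrable_iff] at hr ⊢
    have hbd : ∀ᵐ x ∂(MeasureTheory.volume.restrict (Set.uIoc 0 t)), ‖g x‖ ≤ Mt := by
      filter_upwards [MeasureTheory.ae_restrict_mem measurableSet_uIoc] with x hx
      rw [Set.uIoc_of_le ht.le] at hx
      rw [Real.norm_eq_abs, abs_of_nonneg (hg_nonneg x)]
      exact hMt x ⟨hx.1.le, hx.2⟩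
    have hprod := MeasureTheory.Integrable.bdd_mul (c := Mt) hr hg_meas.aestronglyMeasurable hbd
    exact hprod.congr (Filter.Eventually.of_forall fun x => mul_comm _ _)
  set C2 : ℝ := κ * (T ^ (1 - 2 * lam) / (2 * lam - 1)) with hC2def
  set C3 : ℝ := κ / (p + 1) with hC3def
  set B : ℝ → ℝ := fun t => M * T * (t - T) ^ p + C2 * (t/2) ^ p + C3 * (t/2) ^ (p + 1 - 2 * lam)
    with hBdef
  have hBtend : Tendsto B atTop (nhds 0) := by
    have h1 : Tendsto (fun t : ℝ => (t - T) ^ p) atTop (nhds 0) := by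
      have := (tendsto_rpow_neg_atTop (y := -p) (by linarith)).comp
        (tendsto_atTop_add_const_right atTop (-T) tendsto_id)
      simpa [Function.comp_def, sub_eq_add_neg] using this
    have hhalf : Tendsto (fun t : ℝ => t / 2) atTop atTop :=
      tendsto_id.atTop_div_const (by norm_num)
    have h2 : Tendsto (fun t : ℝ => (t/2) ^ p) atTop (nhds 0) := by
      have := (tendsto_rpow_neg_atTop (y := -p) (by linarith)).comp hhalf
      simpa [Function.comp_def] using this
    have h3 : Tendsto (fun t : ℝ => (t/2) ^ (p + 1 - 2 * lam)) atTop (nhds 0) := by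
      have := (tendsto_rpow_neg_atTop (y := -(p + 1 - 2 * lam)) (by linarith)).comp hhalf
      simpa [Function.comp_def] using this
    have := ((h1.const_mul (M * T)).add (h2.const_mul C2)).add (h3.const_mul C3)
    simpa using this
  refine tendsto_of_tendsto_of_tendsto_of_le_of_le' tendsto_const_nhds hBtend ?_ ?_
  · filter_upwards [eventually_ge_atTop (0:ℝ)] with t ht
    refine intervalIntegral.integral_nonneg ht ?_
    intro u hu
    exact mul_nonneg (Real.rpow_nonneg (by linarith [hu.2]) p) (hg_nonneg u)
  · filter_upwards [eventually_ge_atTop (2 * T)] with t ht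
    have ht0 : 0 < t := by linarith
    have htT : T ≤ t / 2 := by linarith
    have htT' : 0 < t - T := by linarith
    have hhalfpos : 0 < t / 2 := by linarith
    have hI : IntervalIntegrable (fun r => (t - r) ^ p * g r) MeasureTheory.volume 0 t :=
      hInt t ht0
    have hsub1 : Set.uIcc (0:ℝ) T ⊆ Set.uIcc (0:ℝ) t := by
      rw [Set.uIcc_of_le hT.le, Set.uIcc_of_le ht0.le]
      exact Set.Icc_subset_Icc le_rfl (by linarith)
    have hsub2 : Set.uIcc T (t/2) ⊆ Set.uIcc (0:ℝ) t := by
      rw [Set.uIcc_of_le htT, Set.uIcc_of_le ht0.le]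
      exact Set.Icc_subset_Icc hT.le (by linarith)
    have hsub3 : Set.uIcc (t/2) t ⊆ Set.uIcc (0:ℝ) t := by
      rw [Set.uIcc_of_le (by linarith : t/2 ≤ t), Set.uIcc_of_le ht0.le]
      exact Set.Icc_subset_Icc hhalfpos.le le_rfl
    have hI1 := hI.mono_set hsub1
    have hI2 := hI.mono_set hsub2
    have hI3 := hI.mono_set hsub3
    have hsplit : (∫ r in (0:ℝ)..t, (t - r) ^ p * g r)
        = (∫ r in (0:ℝ)..T, (t - r) ^ p * g r) + (∫ r in T..(t/2), (t - r) ^ p * g r)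
          + (∫ r in (t/2)..t, (t - r) ^ p * g r) := by
      rw [← intervalIntegral.integral_add_adjacent_intervals (hI1.trans hI2) hI3,
        ← intervalIntegral.integral_add_adjacent_intervals hI1 hI2]
    -- piece 1
    have hb1 : (∫ r in (0:ℝ)..T, (t - r) ^ p * g r) ≤ M * T * (t - T) ^ p := by
      have hmaj : IntervalIntegrable (fun _ : ℝ => (t - T) ^ p * M) MeasureTheory.volume 0 T :=
        intervalIntegrable_const
      have hpt : ∀ x ∈ Set.Icc (0:ℝ) T, (t - x) ^ p * g x ≤ (t - T) ^ p * M := by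
        intro x hx
        have hle : (t - x) ^ p ≤ (t - T) ^ p :=
          Real.rpow_le_rpow_of_nonpos htT' (by linarith [hx.2]) hp0.le
        calc (t - x) ^ p * g x ≤ (t - T) ^ p * g x :=
              mul_le_mul_of_nonneg_right hle (hg_nonneg x)
          _ ≤ (t - T) ^ p * M :=
              mul_le_mul_of_nonneg_left (hM x ⟨hx.1, hx.2⟩) (Real.rpow_nonneg htT'.le p)
      calc (∫ r in (0:ℝ)..T, (t - r) ^ p * g r)
          ≤ ∫ _ in (0:ℝ)..T, (t - T) ^ p * M :=
            intervalIntegral.integral_mono_on hT.le hI1 hmaj hpt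
        _ = M * T * (t - T) ^ p := by
            rw [intervalIntegral.integral_const]; simp; ring
    -- piece 2
    have hb2 : (∫ r in T..(t/2), (t - r) ^ p * g r) ≤ C2 * (t/2) ^ p := by
      have hcont : IntervalIntegrable (fun r : ℝ => (t/2) ^ p * (κ * r ^ (-(2 * lam))))
          MeasureTheory.volume T (t/2) := by
        apply ContinuousOn.intervalIntegrable
        apply ContinuousOn.const_smul ?_ ((t/2) ^ p)
        apply ContinuousOn.const_smul ?_ κ
        apply ContinuousOn.rpow_const continuousOn_id
        intro x hx
        rw [Set.uIcc_of_le htT] at hx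
        exact Or.inl (ne_of_gt (lt_of_lt_of_le hT hx.1))
      have hpt : ∀ x ∈ Set.Icc T (t/2),
          (t - x) ^ p * g x ≤ (t/2) ^ p * (κ * x ^ (-(2 * lam))) := by
        intro x hx
        have hle : (t - x) ^ p ≤ (t/2) ^ p :=
          Real.rpow_le_rpow_of_nonpos hhalfpos (by linarith [hx.2]) hp0.le
        calc (t - x) ^ p * g x ≤ (t/2) ^ p * g x :=
              mul_le_mul_of_nonneg_right hle (hg_nonneg x)
          _ ≤ (t/2) ^ p * (κ * x ^ (-(2 * lam))) :=
              mul_le_mul_of_nonneg_left (hg_tail x hx.1) (Real.rpow_nonneg hhalfpos.le p)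
      have hval : (∫ r in T..(t/2), (t/2) ^ p * (κ * r ^ (-(2 * lam))))
          = (t/2) ^ p * κ * (((t/2) ^ (-(2*lam)+1) - T ^ (-(2*lam)+1)) / (-(2*lam)+1)) := by
        rw [intervalIntegral.integral_const_mul]
        have h0 : (∫ r in T..(t/2), κ * r ^ (-(2 * lam)))
            = κ * ∫ r in T..(t/2), r ^ (-(2 * lam)) := intervalIntegral.integral_const_mul κ _
        rw [h0, integral_rpow (Or.inr ⟨by intro h; nlinarith, ?_⟩)]
        · ring
        · rw [Set.uIcc_of_le htT]
          intro h
          exact absurd h.1 (by linarith)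
      have hhpow : (0:ℝ) ≤ (t/2) ^ (-(2*lam)+1) := Real.rpow_nonneg hhalfpos.le _
      have hc1 : ((t/2) ^ (-(2*lam)+1) - T ^ (-(2*lam)+1)) / (-(2*lam)+1)
          = (T ^ (-(2*lam)+1) - (t/2) ^ (-(2*lam)+1)) / (2*lam-1) := by
        rw [div_eq_div_iff (by linarith) (by linarith)]; ring
      have hc2 : (T ^ (-(2*lam)+1) - (t/2) ^ (-(2*lam)+1)) / (2*lam-1)
          ≤ T ^ (1 - 2*lam) / (2*lam-1) := by
        rw [show (1:ℝ) - 2*lam = -(2*lam)+1 by ring]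
        apply div_le_div_of_nonneg_right ?_ ?_
        · exact sub_le_self _ hhpow
        · linarith
      have hX : ((t/2) ^ (-(2*lam)+1) - T ^ (-(2*lam)+1)) / (-(2*lam)+1)
          ≤ T ^ (1 - 2*lam) / (2*lam-1) := by rw [hc1]; exact hc2
      have hfin := mul_le_mul_of_nonneg_right (mul_le_mul_of_nonneg_left hX hκ.le)
        (Real.rpow_nonneg hhalfpos.le p)
      calc (∫ r in T..(t/2), (t - r) ^ p * g r)
          ≤ ∫ r in T..(t/2), (t/2) ^ p * (κ * r ^ (-(2 * lam))) :=
            intervalIntegral.integral_mono_on htT hI2 hcont hpt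
        _ = (t/2) ^ p * κ * (((t/2) ^ (-(2*lam)+1) - T ^ (-(2*lam)+1)) / (-(2*lam)+1)) := hval
        _ = κ * (((t/2) ^ (-(2*lam)+1) - T ^ (-(2*lam)+1)) / (-(2*lam)+1)) * (t/2) ^ p := by
            ring
        _ ≤ κ * (T ^ (1 - 2*lam) / (2*lam-1)) * (t/2) ^ p := hfin
        _ = C2 * (t/2) ^ p := by rw [hC2def]
    -- piece 3
    have hb3 : (∫ r in (t/2)..t, (t - r) ^ p * g r) ≤ C3 * (t/2) ^ (p + 1 - 2 * lam) := by
      have hmaj : IntervalIntegrable (fun r : ℝ => κ * (t/2) ^ (-(2*lam)) * (t - r) ^ p)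
          MeasureTheory.volume (t/2) t :=
        (((hIntRpow t).mono_set hsub3).const_mul _)
      have hpt : ∀ x ∈ Set.Icc (t/2) t,
          (t - x) ^ p * g x ≤ κ * (t/2) ^ (-(2*lam)) * (t - x) ^ p := by
        intro x hx
        have h1 : (0:ℝ) ≤ (t - x) ^ p := Real.rpow_nonneg (by linarith [hx.2]) p
        have hle : g x ≤ κ * (t/2) ^ (-(2*lam)) := by
          calc g x ≤ κ * x ^ (-(2 * lam)) := hg_tail x (le_trans htT hx.1)
            _ ≤ κ * (t/2) ^ (-(2*lam)) := by
                apply mul_le_mul_of_nonneg_left _ hκ.le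
                exact Real.rpow_le_rpow_of_nonpos hhalfpos hx.1 (by linarith)
        calc (t - x) ^ p * g x ≤ (t - x) ^ p * (κ * (t/2) ^ (-(2*lam))) :=
              mul_le_mul_of_nonneg_left hle h1
          _ = κ * (t/2) ^ (-(2*lam)) * (t - x) ^ p := by ring
      have hval : (∫ r in (t/2)..t, κ * (t/2) ^ (-(2*lam)) * (t - r) ^ p)
          = κ * (t/2) ^ (-(2*lam)) * ((t/2) ^ (p+1) / (p+1)) := by
        rw [intervalIntegral.integral_const_mul,
          intervalIntegral.integral_comp_sub_left (fun x => x ^ p) t]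
        simp only [sub_self, sub_half]
        rw [integral_rpow (Or.inl hp), Real.zero_rpow (ne_of_gt hp1)]
        ring
      have hAB : (t/2) ^ (-(2*lam)) * (t/2) ^ (p+1) = (t/2) ^ (p + 1 - 2*lam) := by
        rw [← Real.rpow_add hhalfpos]
        congr 1
        ring
      have heq : κ * (t/2) ^ (-(2*lam)) * ((t/2) ^ (p+1) / (p+1))
          = C3 * (t/2) ^ (p + 1 - 2 * lam) := by
        rw [hC3def, ← hAB]
        ring
      calc (∫ r in (t/2)..t, (t - r) ^ p * g r)
          ≤ ∫ r in (t/2)..t, κ * (t/2) ^ (-(2*lam)) * (t - r) ^ p :=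
            intervalIntegral.integral_mono_on (by linarith : t/2 ≤ t) hI3 hmaj hpt
        _ = C3 * (t/2) ^ (p + 1 - 2 * lam) := by rw [hval, heq]
    calc (∫ r in (0:ℝ)..t, (t - r) ^ (2*α-2) * g r)
        = (∫ r in (0:ℝ)..T, (t - r) ^ p * g r) + (∫ r in T..(t/2), (t - r) ^ p * g r)
          + (∫ r in (t/2)..t, (t - r) ^ p * g r) := hsplit
      _ ≤ M * T * (t - T) ^ p + C2 * (t/2) ^ p + C3 * (t/2) ^ (p + 1 - 2 * lam) :=
          add_le_add (add_le_add hb1 hb2) hb3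
      _ = B t := rfl
end

section
/- Let A, B be n×n real matrices and define Q_{k,m} recursively by Q_{k,0} = A^k, Q_{0,m} = B^m, and Q_{k,m} = ∑_{l=0}^k A^{k-l} B Q_{l,m-1} for k, m ≥ 1. If AB = BA, then Q_{k,m} = C(k+m, m) A^k B^m for all k, m ∈ ℕ, where C(k+m,m) is the binomial coefficient. -/
open Matrix Finset

lemma hockey (m k : ℕ) : ∑ l ∈ Finset.range (k + 1), (l + m).choose m = (k + m + 1).choose (m + 1) := by
  induction k with
  | zero => simp
  | succ k ih =>
    rw [Finset.sum_range_succ, ih, show k + 1 + m + 1 = (k + m + 1) + 1 from by ring,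
      show k + 1 + m = k + m + 1 from by ring, Nat.choose_succ_succ' (k + m + 1) m]
    omega

theorem stmt_9 {n : ℕ} (A B : Matrix (Fin n) (Fin n) ℝ)
    (Q : ℕ → ℕ → Matrix (Fin n) (Fin n) ℝ)
    (hQ0 : ∀ k, Q k 0 = A ^ k)
    (hQ0' : ∀ m, Q 0 m = B ^ m)
    (hQrec : ∀ k m : ℕ, Q k (m + 1) = ∑ l ∈ Finset.range (k + 1), A ^ (k - l) * B * Q l m)
    (hcomm : A * B = B * A) :
    ∀ k m : ℕ, Q k m = (((k + m).choose m : ℕ) : ℝ) • (A ^ k * B ^ m) := by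
  have hc : Commute A B := hcomm
  intro k m
  induction m generalizing k with
  | zero => simp [hQ0]
  | succ m ih =>
    rw [hQrec]
    have hterm : ∀ l ∈ Finset.range (k + 1),
        A ^ (k - l) * B * Q l m = (((l + m).choose m : ℕ) : ℝ) • (A ^ k * B ^ (m + 1)) := by
      intro l hl
      have hlk : l ≤ k := by simpa [Nat.lt_succ_iff] using hl
      rw [ih l, mul_smul_comm]
      congr 1
      have hBA : B * A ^ l = A ^ l * B := ((hc.symm).pow_right l)
      calc A ^ (k - l) * B * (A ^ l * B ^ m)
          = A ^ (k - l) * (B * A ^ l) * B ^ m := by noncomm_ring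
        _ = A ^ (k - l) * (A ^ l * B) * B ^ m := by rw [hBA]
        _ = (A ^ (k - l) * A ^ l) * (B * B ^ m) := by noncomm_ring
        _ = A ^ k * B ^ (m + 1) := by
            rw [← pow_add, Nat.sub_add_cancel hlk, pow_succ']
    rw [Finset.sum_congr rfl hterm, ← Finset.sum_smul]
    congr 1
    rw [← Nat.cast_sum, hockey m k]
    norm_cast
end

section
/- Let α, β > 0, δ ∈ ℝ, and A, B ∈ ℝ^{n×n} with Q_{k,m} defined by Q_{k,0} = A^k, Q_{0,m} = B^m, Q_{k,m} = ∑_{l=0}^k A^{k-l} B Q_{l,m-1} (k,m ≥ 1). Then ‖Q_{k,m}‖ ≤ C(k+m, m) ‖A‖^k ‖B‖^m for all k, m ∈ ℕ, for any submultiplicative matrix norm ‖·‖. -/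
open Matrix Finset

theorem stmt_10 {n : ℕ} (A B : Matrix (Fin n) (Fin n) ℝ)
    (Q : ℕ → ℕ → Matrix (Fin n) (Fin n) ℝ)
    (hQ0 : ∀ k, Q k 0 = A ^ k)
    (hQ0' : ∀ m, Q 0 m = B ^ m)
    (hQrec : ∀ k m : ℕ, Q k (m + 1) = ∑ l ∈ Finset.range (k + 1), A ^ (k - l) * B * Q l m)
    (N : Matrix (Fin n) (Fin n) ℝ → ℝ)
    (hN_nonneg : ∀ X, 0 ≤ N X)
    (hN_zero : N 0 = 0)
    (hN_add : ∀ X Y, N (X + Y) ≤ N X + N Y)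
    (hN_mul : ∀ X Y, N (X * Y) ≤ N X * N Y)
    (hN_one : N 1 = 1) :
    ∀ k m : ℕ, N (Q k m) ≤ (((k + m).choose m : ℕ) : ℝ) * (N A) ^ k * (N B) ^ m := by
  have hNsum : ∀ (s : Finset ℕ) (f : ℕ → Matrix (Fin n) (Fin n) ℝ),
      N (∑ i ∈ s, f i) ≤ ∑ i ∈ s, N (f i) := by
    intro s f
    induction s using Finset.induction with
    | empty => simp [hN_zero]
    | insert _ _ h ih =>
        rw [Finset.sum_insert h, Finset.sum_insert h]
        exact le_trans (hN_add _ _) (by linarith)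
  have hNpow : ∀ (X : Matrix (Fin n) (Fin n) ℝ) (k : ℕ), N (X ^ k) ≤ N X ^ k := by
    intro X k
    induction k with
    | zero => simp [hN_one]
    | succ k ih =>
        rw [pow_succ, pow_succ]
        exact le_trans (hN_mul _ _) (mul_le_mul_of_nonneg_right ih (hN_nonneg X))
  intro k m
  induction m generalizing k with
  | zero => simpa [hQ0] using hNpow A k
  | succ m ih =>
      rw [hQrec]
      calc N (∑ l ∈ Finset.range (k + 1), A ^ (k - l) * B * Q l m)
          ≤ ∑ l ∈ Finset.range (k + 1), N (A ^ (k - l) * B * Q l m) := hNsum _ _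
        _ ≤ ∑ l ∈ Finset.range (k + 1),
              (((l + m).choose m : ℕ) : ℝ) * N A ^ k * N B ^ (m + 1) := by
            apply Finset.sum_le_sum
            intro l hl
            have hlk : l ≤ k := by
              simp only [Finset.mem_range] at hl; omega
            have h1 : N (A ^ (k - l) * B * Q l m) ≤ N A ^ (k - l) * N B * N (Q l m) := by
              calc N (A ^ (k - l) * B * Q l m) ≤ N (A ^ (k - l) * B) * N (Q l m) := hN_mul _ _
                _ ≤ N (A ^ (k - l)) * N B * N (Q l m) :=
                    mul_le_mul_of_nonneg_right (hN_mul _ _) (hN_nonneg _)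
                _ ≤ N A ^ (k - l) * N B * N (Q l m) := by
                    apply mul_le_mul_of_nonneg_right _ (hN_nonneg _)
                    exact mul_le_mul_of_nonneg_right (hNpow A _) (hN_nonneg _)
            refine h1.trans ?_
            have h2 : N A ^ (k - l) * N B * N (Q l m) ≤
                N A ^ (k - l) * N B * ((((l + m).choose m : ℕ) : ℝ) * N A ^ l * N B ^ m) := by
              apply mul_le_mul_of_nonneg_left (ih l)
              exact mul_nonneg (pow_nonneg (hN_nonneg A) _) (hN_nonneg B)
            refine h2.trans (le_of_eq ?_)
            have hp : N A ^ (k - l) * N A ^ l = N A ^ k := by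
              rw [← pow_add]; congr 1; omega
            rw [← hp]; ring
        _ = (((k + (m + 1)).choose (m + 1) : ℕ) : ℝ) * N A ^ k * N B ^ (m + 1) := by
            rw [← Finset.sum_mul, ← Finset.sum_mul, ← Nat.cast_sum, hockey,
              show k + (m + 1) = k + m + 1 from by omega]
end

section
/- For α, β > 0, δ > 0 and A, B ∈ ℝ^{n×n}, the double series 𝓔^{A,B}_{α,β,δ}(t) = ∑_{k=0}^∞ ∑_{m=0}^∞ Q_{k,m} t^{kα+mβ} / Γ(kα+mβ+δ) converges absolutely for every t ≥ 0, where Q_{k,m} is defined by Q_{k,0} = A^k, Q_{0,m} = B^m, Q_{k,m} = ∑_{l=0}^k A^{k-l} B Q_{l,m-1} for k, m ≥ 1. -/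
open Matrix Finset Real

attribute [local instance] Matrix.linftyOpNormedRing

/-- Γ is at least 1/6 on (0, 2]. -/
lemma gamma_ge_sixth {x : ℝ} (hx : 0 < x) (hx2 : x ≤ 2) : (1/6 : ℝ) ≤ Real.Gamma x := by
  have hΓ2 : Real.Gamma 2 = 1 := by
    rw [show (2:ℝ) = 1 + 1 by norm_num, Real.Gamma_add_one one_ne_zero, Real.Gamma_one, mul_one]
  have h1 : Real.Gamma (x + 2) = (x + 1) * x * Real.Gamma x := by
    rw [show x + 2 = (x + 1) + 1 by ring, Real.Gamma_add_one (by positivity),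
      Real.Gamma_add_one hx.ne', mul_assoc]
  have h2 : (1:ℝ) ≤ Real.Gamma (x + 2) := by
    have := Real.Gamma_strictMonoOn_Ici.monotoneOn (Set.mem_Ici.mpr le_rfl)
      (Set.mem_Ici.mpr (by linarith : (2:ℝ) ≤ x + 2)) (by linarith)
    rwa [hΓ2] at this
  have hg := Real.Gamma_pos_of_pos hx
  have h6 : (x + 1) * x ≤ 6 := by nlinarith
  nlinarith [mul_le_mul_of_nonneg_right h6 hg.le]

lemma cast_floor_sub_two_le {y : ℝ} (hy : 0 ≤ y) :
    ((⌊y⌋₊ - 2 : ℕ) : ℝ) ≤ max 0 (y - 2) := by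
  rcases le_or_gt 2 ⌊y⌋₊ with h | h
  · rw [Nat.cast_sub h]
    refine le_max_of_le_right ?_
    have := Nat.floor_le hy
    push_cast
    linarith
  · have h0 : ⌊y⌋₊ - 2 = 0 := by omega
    simp [h0]

lemma sub_three_le_cast_floor_sub_two {y : ℝ} (hy : 0 ≤ y) :
    y - 3 ≤ ((⌊y⌋₊ - 2 : ℕ) : ℝ) := by
  rcases le_or_gt 2 ⌊y⌋₊ with h | h
  · rw [Nat.cast_sub h]
    have := Nat.lt_floor_add_one y
    push_cast
    linarith
  · have h1 : (⌊y⌋₊ : ℝ) ≤ 1 := by exact_mod_cast Nat.lt_succ_iff.mp h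
    have := Nat.lt_floor_add_one y
    have : (0:ℝ) ≤ ((⌊y⌋₊ - 2 : ℕ) : ℝ) := Nat.cast_nonneg _
    linarith [Nat.lt_floor_add_one y]

/-- The key Gamma lower bound: Γ(kα+mβ+δ) ≥ (1/6)·(⌊kα⌋-2)!·(⌊mβ⌋-2)!. -/
lemma gamma_lower (α β δ : ℝ) (hα : 0 < α) (hβ : 0 < β) (hδ : 0 < δ) (k m : ℕ) :
    (1/6 : ℝ) * (Nat.factorial (⌊(k:ℝ) * α⌋₊ - 2)) * (Nat.factorial (⌊(m:ℝ) * β⌋₊ - 2))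
      ≤ Real.Gamma ((k:ℝ) * α + (m:ℝ) * β + δ) := by
  have hkα : 0 ≤ (k:ℝ) * α := by positivity
  have hmβ : 0 ≤ (m:ℝ) * β := by positivity
  set x : ℝ := (k:ℝ) * α + (m:ℝ) * β + δ with hxdef
  have hx0 : 0 < x := by positivity
  rcases lt_or_ge x 2 with h2 | h2
  · have hk2 : (k:ℝ) * α < 2 := by linarith
    have hm2 : (m:ℝ) * β < 2 := by linarith
    have hfk : ⌊(k:ℝ) * α⌋₊ - 2 = 0 := by
      have : ⌊(k:ℝ) * α⌋₊ < 2 := by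
        rw [Nat.floor_lt hkα]; norm_num [hk2]
      omega
    have hfm : ⌊(m:ℝ) * β⌋₊ - 2 = 0 := by
      have : ⌊(m:ℝ) * β⌋₊ < 2 := by
        rw [Nat.floor_lt hmβ]; norm_num [hm2]
      omega
    rw [hfk, hfm]
    simpa using gamma_ge_sixth hx0 h2.le
  · set u : ℕ := ⌊(k:ℝ) * α⌋₊ - 2 with hu
    set v : ℕ := ⌊(m:ℝ) * β⌋₊ - 2 with hv
    have hu' : (u:ℝ) ≤ max 0 ((k:ℝ) * α - 2) := cast_floor_sub_two_le hkα
    have hv' : (v:ℝ) ≤ max 0 ((m:ℝ) * β - 2) := cast_floor_sub_two_le hmβ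
    have hM : max 0 ((k:ℝ) * α - 2) + max 0 ((m:ℝ) * β - 2) + 2 ≤ x := by
      rcases le_total ((k:ℝ) * α - 2) 0 with h | h <;>
        rcases le_total ((m:ℝ) * β - 2) 0 with h' | h' <;>
          simp only [max_eq_left, max_eq_right, h, h'] <;> linarith
    have key : ((u + v + 2 : ℕ) : ℝ) ≤ x := by push_cast; linarith
    have hmem1 : ((u + v + 2 : ℕ) : ℝ) ∈ Set.Ici (2:ℝ) := by
      simp only [Set.mem_Ici]; push_cast; linarith [Nat.cast_nonneg (α := ℝ) u,
        Nat.cast_nonneg (α := ℝ) v]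
    have mono := Real.Gamma_strictMonoOn_Ici.monotoneOn hmem1 (Set.mem_Ici.mpr h2) key
    have hΓn : Real.Gamma ((u + v + 2 : ℕ) : ℝ) = (Nat.factorial (u + v + 1) : ℝ) := by
      rw [show ((u + v + 2 : ℕ) : ℝ) = ((u + v + 1 : ℕ) : ℝ) + 1 by push_cast; ring,
        Real.Gamma_nat_eq_factorial]
    have hfac : Nat.factorial u * Nat.factorial v ≤ Nat.factorial (u + v + 1) :=
      le_trans (Nat.le_of_dvd (Nat.factorial_pos _)
        (Nat.factorial_mul_factorial_dvd_factorial_add u v))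
        (Nat.factorial_le (by omega))
    have hfac' : ((Nat.factorial u : ℝ)) * (Nat.factorial v) ≤ (Nat.factorial (u + v + 1) : ℝ) := by
      exact_mod_cast hfac
    have h1u : (1:ℝ) ≤ (Nat.factorial u : ℝ) := by exact_mod_cast (Nat.factorial_pos u)
    have h1v : (1:ℝ) ≤ (Nat.factorial v : ℝ) := by exact_mod_cast (Nat.factorial_pos v)
    rw [hΓn] at mono
    nlinarith

/-- 1-D summability of `c^k / (⌊kα⌋ - 2)!`. -/
lemma aux_summable {α c : ℝ} (hα : 0 < α) (hc : 1 ≤ c) :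
    Summable (fun k : ℕ => c ^ k / (Nat.factorial (⌊(k:ℝ) * α⌋₊ - 2) : ℝ)) := by
  have hc0 : (0:ℝ) < c := by linarith
  set b : ℝ := (2 * c) ^ (α⁻¹) with hb
  have h2c : (1:ℝ) ≤ 2 * c := by linarith
  have hb1 : 1 ≤ b := Real.one_le_rpow h2c (by positivity)
  have hb0 : (0:ℝ) < b := by linarith
  have hbα : b ^ α = 2 * c := by
    rw [hb, ← Real.rpow_mul (by linarith : (0:ℝ) ≤ 2 * c), inv_mul_cancel₀ hα.ne',
      Real.rpow_one]
  have hbound : ∀ k : ℕ, c ^ k / (Nat.factorial (⌊(k:ℝ) * α⌋₊ - 2) : ℝ)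
      ≤ (Real.exp b * b ^ 3) * (2⁻¹ : ℝ) ^ k := by
    intro k
    set u : ℕ := ⌊(k:ℝ) * α⌋₊ - 2 with hu
    have hfac0 : (0:ℝ) < (Nat.factorial u : ℝ) := by exact_mod_cast Nat.factorial_pos u
    have h1 : b ^ ((k:ℝ) * α - 3) ≤ (b:ℝ) ^ (u:ℕ) := by
      rw [← Real.rpow_natCast b u]
      exact Real.rpow_le_rpow_of_exponent_le hb1
        (sub_three_le_cast_floor_sub_two (by positivity))
    have h2 : (b:ℝ) ^ (u:ℕ) ≤ Real.exp b * (Nat.factorial u : ℝ) := by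
      have h := Real.pow_div_factorial_le_exp b hb0.le u
      rw [div_le_iff₀ hfac0] at h
      linarith
    have h3 : b ^ ((k:ℝ) * α - 3) = (2 * c) ^ k / b ^ (3:ℕ) := by
      rw [Real.rpow_sub hb0, show ((3:ℝ)) = ((3:ℕ):ℝ) by norm_num, Real.rpow_natCast]
      congr 1
      rw [mul_comm (k:ℝ) α, Real.rpow_mul hb0.le, hbα, Real.rpow_natCast]
    have hb3 : (0:ℝ) < b ^ (3:ℕ) := by positivity
    have hkey : (2 * c) ^ k ≤ Real.exp b * (Nat.factorial u : ℝ) * b ^ (3:ℕ) := by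
      have := (h1.trans h2)
      rw [h3, div_le_iff₀ hb3] at this
      linarith
    have hck : c ^ k = (2 * c) ^ k * (2⁻¹:ℝ) ^ k := by
      rw [mul_pow, mul_comm ((2:ℝ) ^ k), mul_assoc, ← mul_pow]
      norm_num
    have hpos : (0:ℝ) ≤ (2⁻¹:ℝ) ^ k := by positivity
    rw [div_le_iff₀ hfac0, hck]
    nlinarith [mul_le_mul_of_nonneg_right hkey hpos]
  refine Summable.of_nonneg_of_le (fun k => by positivity) hbound ?_
  exact (summable_geometric_of_lt_one (by norm_num) (by norm_num)).mul_left _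

set_option maxHeartbeats 1000000 in
theorem stmt_11 {n : ℕ} (α β δ t : ℝ) (hα : 0 < α) (hβ : 0 < β) (hδ : 0 < δ) (ht : 0 ≤ t)
    (A B : Matrix (Fin n) (Fin n) ℝ)
    (Q : ℕ → ℕ → Matrix (Fin n) (Fin n) ℝ)
    (hQ0 : ∀ k, Q k 0 = A ^ k)
    (hQ0' : ∀ m, Q 0 m = B ^ m)
    (hQrec : ∀ k m : ℕ, Q k (m + 1) = ∑ l ∈ Finset.range (k + 1), A ^ (k - l) * B * Q l m) :
    Summable (fun km : ℕ × ℕ =>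
      ‖Q km.1 km.2‖ * t ^ ((km.1 : ℝ) * α + (km.2 : ℝ) * β)
        / Real.Gamma ((km.1 : ℝ) * α + (km.2 : ℝ) * β + δ)) := by
  classical
  set a : ℝ := max ‖A‖ (max ‖B‖ 1) with ha
  have ha1 : (1:ℝ) ≤ a := le_trans (le_max_right _ _) (le_max_right _ _)
  have ha0 : (0:ℝ) < a := by linarith
  have haA : ‖A‖ ≤ a := le_max_left _ _
  have haB : ‖B‖ ≤ a := le_trans (le_max_left _ _) (le_max_right _ _)
  -- norm of the identity matrix
  have hone : ‖(1 : Matrix (Fin n) (Fin n) ℝ)‖ ≤ 1 := by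
    rcases Nat.eq_zero_or_pos n with hn | hn
    · subst hn
      have : (1 : Matrix (Fin 0) (Fin 0) ℝ) = 0 := Subsingleton.elim _ _
      simp [this]
    · haveI : Nonempty (Fin n) := Fin.pos_iff_nonempty.mp hn
      rw [show (1 : Matrix (Fin n) (Fin n) ℝ) = Matrix.diagonal (fun _ => 1) from
        Matrix.diagonal_one.symm, Matrix.linfty_opNorm_diagonal]
      exact le_trans (pi_norm_const_le (1:ℝ)) (by simp)
  -- powers of A
  have hApow : ∀ j : ℕ, ‖A ^ j‖ ≤ a ^ j := by
    intro j
    induction j with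
    | zero => rw [pow_zero, pow_zero]; exact hone
    | succ j ih =>
      rw [pow_succ, pow_succ]
      exact le_trans (norm_mul_le _ _) (mul_le_mul ih haA (norm_nonneg _) (by positivity))
  have hBpow : ∀ j : ℕ, ‖B ^ j‖ ≤ a ^ j := by
    intro j
    induction j with
    | zero => rw [pow_zero, pow_zero]; exact hone
    | succ j ih =>
      rw [pow_succ, pow_succ]
      exact le_trans (norm_mul_le _ _) (mul_le_mul ih haB (norm_nonneg _) (by positivity))
  -- the key combinatorial bound on Q
  have hQbound : ∀ m k : ℕ, ‖Q k m‖ ≤ (2 * a) ^ (k + m) := by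
    intro m
    induction m with
    | zero =>
      intro k
      rw [hQ0 k, Nat.add_zero]
      refine (hApow k).trans (pow_le_pow_left₀ ha0.le (by linarith) k)
    | succ m ih =>
      intro k
      rw [hQrec k m]
      have hterm : ∀ l ∈ Finset.range (k + 1),
          ‖A ^ (k - l) * B * Q l m‖ ≤ (2:ℝ) ^ (l + m) * a ^ (k + m + 1) := by
        intro l hl
        have hlk : l ≤ k := Nat.lt_succ_iff.mp (Finset.mem_range.mp hl)
        have h1 : ‖A ^ (k - l) * B * Q l m‖ ≤ ‖A ^ (k - l)‖ * ‖B‖ * ‖Q l m‖ :=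
          le_trans (norm_mul_le _ _)
            (mul_le_mul_of_nonneg_right (norm_mul_le _ _) (norm_nonneg _))
        have h2 : ‖A ^ (k - l)‖ * ‖B‖ * ‖Q l m‖ ≤ a ^ (k - l) * a * (2 * a) ^ (l + m) := by
          have hq := ih l
          have hqn : (0:ℝ) ≤ ‖Q l m‖ := norm_nonneg _
          have h2a : (0:ℝ) ≤ (2 * a) ^ (l + m) := by positivity
          refine mul_le_mul ?_ hq hqn (by positivity)
          exact mul_le_mul (hApow _) haB (norm_nonneg _) (by positivity)
        have h3 : a ^ (k - l) * a * (2 * a) ^ (l + m) = (2:ℝ) ^ (l + m) * a ^ (k + m + 1) := by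
          rw [mul_pow]
          have : a ^ (k - l) * a * ((2:ℝ) ^ (l + m) * a ^ (l + m))
              = (2:ℝ) ^ (l + m) * (a ^ (k - l) * a ^ 1 * a ^ (l + m)) := by ring
          rw [this, ← pow_add, ← pow_add]
          congr 2
          omega
        linarith [h1.trans h2]
      have hsum2 : ∑ l ∈ Finset.range (k + 1), (2:ℝ) ^ (l + m) * a ^ (k + m + 1)
          ≤ (2 * a) ^ (k + (m + 1)) := by
        have hgeom : ∑ l ∈ Finset.range (k + 1), (2:ℝ) ^ l = 2 ^ (k + 1) - 1 := by
          rw [geom_sum_eq (by norm_num : (2:ℝ) ≠ 1) (k + 1)]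
          norm_num
        have hrw : ∑ l ∈ Finset.range (k + 1), (2:ℝ) ^ (l + m) * a ^ (k + m + 1)
            = (∑ l ∈ Finset.range (k + 1), (2:ℝ) ^ l) * ((2:ℝ) ^ m * a ^ (k + m + 1)) := by
          rw [Finset.sum_mul]
          exact Finset.sum_congr rfl fun l _ => by rw [pow_add]; ring
        rw [hrw, hgeom, show k + (m + 1) = k + m + 1 by omega, mul_pow]
        have h2m : (0:ℝ) ≤ (2:ℝ) ^ m := by positivity
        have hap : (0:ℝ) ≤ a ^ (k + m + 1) := by positivity
        have h2 : (2:ℝ) ^ (k + m + 1) = 2 ^ (k + 1) * 2 ^ m := by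
          rw [show k + m + 1 = (k + 1) + m by omega, pow_add]
        rw [h2]
        nlinarith [mul_nonneg h2m hap]
      calc ‖∑ l ∈ Finset.range (k + 1), A ^ (k - l) * B * Q l m‖
          ≤ ∑ l ∈ Finset.range (k + 1), ‖A ^ (k - l) * B * Q l m‖ := norm_sum_le _ _
        _ ≤ ∑ l ∈ Finset.range (k + 1), (2:ℝ) ^ (l + m) * a ^ (k + m + 1) :=
            Finset.sum_le_sum hterm
        _ ≤ (2 * a) ^ (k + (m + 1)) := hsum2
  -- geometric factors for the t-powers
  set T : ℝ := max 1 t with hT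
  have hT1 : (1:ℝ) ≤ T := le_max_left _ _
  have hT0 : (0:ℝ) < T := by linarith
  set s : ℝ := T ^ α with hs
  set r : ℝ := T ^ β with hr
  have hs1 : (1:ℝ) ≤ s := Real.one_le_rpow hT1 hα.le
  have hr1 : (1:ℝ) ≤ r := Real.one_le_rpow hT1 hβ.le
  set c₁ : ℝ := 2 * a * s with hc₁def
  set c₂ : ℝ := 2 * a * r with hc₂def
  have hc₁ : (1:ℝ) ≤ c₁ := by nlinarith
  have hc₂ : (1:ℝ) ≤ c₂ := by nlinarith
  -- the summable majorant
  have hmaj : Summable (fun km : ℕ × ℕ =>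
      6 * (c₁ ^ km.1 / (Nat.factorial (⌊(km.1:ℝ) * α⌋₊ - 2) : ℝ)
        * (c₂ ^ km.2 / (Nat.factorial (⌊(km.2:ℝ) * β⌋₊ - 2) : ℝ)))) := by
    refine Summable.mul_left 6 ?_
    have hsa := aux_summable hα hc₁
    have hsb := aux_summable hβ hc₂
    exact Summable.mul_of_nonneg
      (f := fun k : ℕ => c₁ ^ k / (Nat.factorial (⌊(k:ℝ) * α⌋₊ - 2) : ℝ))
      (g := fun m : ℕ => c₂ ^ m / (Nat.factorial (⌊(m:ℝ) * β⌋₊ - 2) : ℝ))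
      hsa hsb (fun k => by positivity) (fun m => by positivity)
  refine Summable.of_nonneg_of_le ?_ ?_ hmaj
  · intro km
    have he0 : 0 ≤ (km.1:ℝ) * α + (km.2:ℝ) * β := by positivity
    have hΓ : 0 < Real.Gamma ((km.1:ℝ) * α + (km.2:ℝ) * β + δ) :=
      Real.Gamma_pos_of_pos (by positivity)
    exact div_nonneg (mul_nonneg (norm_nonneg _) (Real.rpow_nonneg ht _)) hΓ.le
  · rintro ⟨k, m⟩
    simp only
    set e : ℝ := (k:ℝ) * α + (m:ℝ) * β with he
    have he0 : 0 ≤ e := by positivity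
    have hΓpos : 0 < Real.Gamma (e + δ) := Real.Gamma_pos_of_pos (by positivity)
    set u : ℕ := ⌊(k:ℝ) * α⌋₊ - 2 with hu
    set v : ℕ := ⌊(m:ℝ) * β⌋₊ - 2 with hv
    have hGl : (1/6 : ℝ) * (Nat.factorial u) * (Nat.factorial v) ≤ Real.Gamma (e + δ) :=
      gamma_lower α β δ hα hβ hδ k m
    have hGlpos : (0:ℝ) < (1/6 : ℝ) * (Nat.factorial u) * (Nat.factorial v) := by
      have h1 : (0:ℝ) < (Nat.factorial u : ℝ) := by exact_mod_cast Nat.factorial_pos u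
      have h2 : (0:ℝ) < (Nat.factorial v : ℝ) := by exact_mod_cast Nat.factorial_pos v
      positivity
    -- numerator bound
    have htpow : t ^ e ≤ s ^ k * r ^ m := by
      have h1 : t ^ e ≤ T ^ e := Real.rpow_le_rpow ht (le_max_right 1 t) he0
      have h2 : T ^ e = s ^ k * r ^ m := by
        rw [he, Real.rpow_add hT0, hs, hr]
        congr 1
        · rw [mul_comm (k:ℝ) α, Real.rpow_mul hT0.le, Real.rpow_natCast]
        · rw [mul_comm (m:ℝ) β, Real.rpow_mul hT0.le, Real.rpow_natCast]
      linarith [h1, h2.le, h2.ge]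
    have hnum : ‖Q k m‖ * t ^ e ≤ c₁ ^ k * c₂ ^ m := by
      have h1 : ‖Q k m‖ * t ^ e ≤ (2 * a) ^ (k + m) * (s ^ k * r ^ m) :=
        mul_le_mul (hQbound m k) htpow (Real.rpow_nonneg ht _) (by positivity)
      have h2 : (2 * a) ^ (k + m) * (s ^ k * r ^ m) = c₁ ^ k * c₂ ^ m := by
        rw [pow_add, hc₁def, hc₂def, mul_pow, mul_pow]
        ring
      linarith [h1, h2.le]
    have hdiv : ‖Q k m‖ * t ^ e / Real.Gamma (e + δ)
        ≤ (c₁ ^ k * c₂ ^ m) / ((1/6 : ℝ) * (Nat.factorial u) * (Nat.factorial v)) :=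
      div_le_div₀ (by positivity) hnum hGlpos hGl
    refine hdiv.trans (le_of_eq ?_)
    have h1 : ((Nat.factorial u : ℝ)) ≠ 0 := by positivity
    have h2 : ((Nat.factorial v : ℝ)) ≠ 0 := by positivity
    field_simp
end
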